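/- Let n ≥ 1, 0 < β < n, 1 < p₁ < n/β, 1/p₂ = 1/p₁ − β/n, 0 < q₁ ≤ q₂ < ∞, and let α, λ be reals with 0 < 2λ < α < n(1 − 1/p₂) − β. Assume there is C₀ > 0 with ‖I^β g‖_{L^{p₂}} ≤ C₀ ‖g‖_{L^{p₁}} for every g ∈ L^{p₁}(ℝⁿ). Let (λ_j)_{j∈ℤ} be nonnegative reals, all but finitely many equal to zero, and for each j let a_j : ℝⁿ → ℝ be measurable, supported in B_j = {x : |x| ≤ 2^j}, with ‖a_j‖_{L^{p₁}} ≤ 2^{−jα}; set f = ∑_{j∈ℤ} λ_j a_j. Then there is a constant C, depending only on n, β, p₁, q₁, q₂, α, λ and C₀ (but not on f, (λ_j) or (a_j)), such that sup_{L∈ℤ} 2^{−Lλ} ( ∑_{k ≤ L} 2^{kαq₂} ‖(I^β f)·χ_{F_k}‖_{L^{p₂}}^{q₂} )^{1/q₂} ≤ C · sup_{L∈ℤ} 2^{−Lλ} ( ∑_{j ≤ L} λ_j^{q₁} )^{1/q₁}. -/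

import Mathlib

open MeasureTheory
open scoped ENNReal

/-- The Riesz potential `I^β f (x) = ∫ f(y) ‖x - y‖^(β - n) dy` on `ℝⁿ`. -/
noncomputable def rieszPot (n : ℕ) (β : ℝ) (f : EuclideanSpace ℝ (Fin n) → ℝ)
    (x : EuclideanSpace ℝ (Fin n)) : ℝ :=
  ∫ y, f y * ‖x - y‖ ^ (β - (n : ℝ))

/-- The dyadic annulus `F_k = B_k \ B_{k-1}`, where `B_k` is the closed ball of
radius `2^k` centred at the origin. -/
def annulus (n : ℕ) (k : ℤ) : Set (EuclideanSpace ℝ (Fin n)) :=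
  Metric.closedBall 0 ((2 : ℝ) ^ k) \ Metric.closedBall 0 ((2 : ℝ) ^ (k - 1))

/-!
Fix a scale `k` and split `f = ∑ λ_j a_j` into the atoms with `j < k - 1` and the rest. On `F_k`
the first part is seen from distance at least `2^{k-2}`, so the kernel is bounded there and only the
`L¹` norms of these atoms enter, which Hölder's inequality on `B_j` controls; the second part is
handled by the `L^{p₁} → L^{p₂}` bound for `I^β`. With `M` the right-hand side norm of `(λ_j)`
we have `λ_j ≤ 2^{jλ} M`, so both parts are geometric series in `j`, summable because
`λ < α < n(1 - 1/p₁)`, and `‖(I^β f) χ_{F_k}‖_{p₂} ≲ 2^{k(λ-α)} M`. Summing these bounds over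
`k ≤ L` is again geometric and gives the bound `≲ 2^{Lλ} M`.
-/

open Function Metric

section DyadicWeights

lemma ofReal_two_rpow (t : ℝ) : ENNReal.ofReal ((2 : ℝ) ^ t) = 2 ^ t := by
  rw [← ENNReal.ofReal_rpow_of_pos two_pos, ENNReal.ofReal_ofNat]

lemma two_rpow_add (s t : ℝ) : (2 : ℝ≥0∞) ^ (s + t) = 2 ^ s * 2 ^ t :=
  ENNReal.rpow_add s t two_ne_zero ENNReal.ofNat_ne_top

lemma two_rpow_ne_top (t : ℝ) : (2 : ℝ≥0∞) ^ t ≠ ⊤ :=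
  ENNReal.rpow_ne_top_of_ne_zero two_ne_zero ENNReal.ofNat_ne_top

lemma two_rpow_mul_two_rpow_neg (t : ℝ) : (2 : ℝ≥0∞) ^ t * 2 ^ (-t) = 1 := by
  rw [← two_rpow_add, add_neg_cancel, ENNReal.rpow_zero]

lemma inv_one_sub_two_rpow_neg_ne_top {c : ℝ} (hc : 0 < c) : (1 - (2 : ℝ≥0∞) ^ (-c))⁻¹ ≠ ⊤ := by
  rw [ENNReal.inv_ne_top]
  exact (tsub_pos_iff_lt.2 (ENNReal.rpow_lt_one_of_one_lt_of_neg ENNReal.one_lt_two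
    (neg_neg_iff_pos.2 hc))).ne'

lemma tsum_two_rpow_of_le (L : ℤ) (c : ℝ) :
    ∑' k : {k : ℤ // k ≤ L}, (2 : ℝ≥0∞) ^ ((k : ℝ) * c) =
      2 ^ ((L : ℝ) * c) * (1 - 2 ^ (-c))⁻¹ := by
  let e : ℕ ≃ {k : ℤ // k ≤ L} :=
    { toFun m := ⟨L - m, by omega⟩
      invFun k := (L - k).toNat
      left_inv m := by simp
      right_inv k := by ext; simp; omega }
  rw [← e.tsum_eq, ← ENNReal.tsum_geometric, ← ENNReal.tsum_mul_left]
  congr 1 with m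
  rw [← ENNReal.rpow_natCast, ← ENNReal.rpow_mul, ← two_rpow_add]
  simp only [e, Equiv.coe_fn_mk, Int.cast_sub, Int.cast_natCast]
  ring_nf

lemma sum_two_rpow_le_of_le {T : Finset ℤ} {L : ℤ} (hT : ∀ j ∈ T, j ≤ L) (c : ℝ) :
    ∑ j ∈ T, (2 : ℝ≥0∞) ^ ((j : ℝ) * c) ≤ 2 ^ ((L : ℝ) * c) * (1 - 2 ^ (-c))⁻¹ := by
  rw [← tsum_two_rpow_of_le, ← Finset.sum_subtype_of_mem _ hT]
  exact ENNReal.sum_le_tsum _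

lemma sum_two_rpow_neg_le_of_ge {T : Finset ℤ} {K : ℤ} (hT : ∀ j ∈ T, K ≤ j) (c : ℝ) :
    ∑ j ∈ T, (2 : ℝ≥0∞) ^ (-(j : ℝ) * c) ≤ 2 ^ (-(K : ℝ) * c) * (1 - 2 ^ (-c))⁻¹ := by
  have hT' : ∀ i ∈ T.map (Equiv.neg ℤ).toEmbedding, i ≤ -K := by
    simp only [Finset.mem_map_equiv, Equiv.neg_symm, Equiv.neg_apply]
    exact fun i hi => by linarith [hT _ hi]
  simpa using sum_two_rpow_le_of_le hT' c

end DyadicWeights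

section MorreyNorms

noncomputable def seqMorreyNorm (lam q : ℝ) (s : ℤ → ℝ) : ℝ≥0∞ :=
  ⨆ L : ℤ, ENNReal.ofReal ((2 : ℝ) ^ (-(L : ℝ) * lam)) *
    (∑' j : {j : ℤ // j ≤ L}, ENNReal.ofReal (s j.1) ^ q) ^ (1 / q)

noncomputable def herzMorreyNorm (n : ℕ) (α lam p q : ℝ) (g : EuclideanSpace ℝ (Fin n) → ℝ) :
    ℝ≥0∞ :=
  ⨆ L : ℤ, ENNReal.ofReal ((2 : ℝ) ^ (-(L : ℝ) * lam)) *
    (∑' k : {k : ℤ // k ≤ L}, ENNReal.ofReal ((2 : ℝ) ^ ((k.1 : ℝ) * α * q)) *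
      eLpNorm ((annulus n k.1).indicator g) (ENNReal.ofReal p) volume ^ q) ^ (1 / q)

lemma ofReal_le_two_rpow_mul_seqMorreyNorm {lam q : ℝ} (hq : 0 < q) (s : ℤ → ℝ) (j : ℤ) :
    ENNReal.ofReal (s j) ≤ 2 ^ ((j : ℝ) * lam) * seqMorreyNorm lam q s := by
  have hterm : ENNReal.ofReal (s j) ≤
      (∑' i : {i : ℤ // i ≤ j}, ENNReal.ofReal (s i.1) ^ q) ^ (1 / q) := by
    rw [← ENNReal.rpow_rpow_inv hq.ne' (ENNReal.ofReal (s j)), ← one_div]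
    exact ENNReal.rpow_le_rpow (ENNReal.le_tsum (⟨j, le_rfl⟩ : {i : ℤ // i ≤ j})) (by positivity)
  calc ENNReal.ofReal (s j)
      = 2 ^ ((j : ℝ) * lam) * (2 ^ (-(j : ℝ) * lam) * ENNReal.ofReal (s j)) := by
        rw [← mul_assoc, neg_mul, two_rpow_mul_two_rpow_neg, one_mul]
    _ ≤ 2 ^ ((j : ℝ) * lam) * seqMorreyNorm lam q s := by
        gcongr
        rw [← ofReal_two_rpow]
        exact (mul_le_mul_right hterm _).trans (le_iSup_of_le j le_rfl)

lemma herzMorreyNorm_le_of_forall_annulus {n : ℕ} {α lam p q : ℝ} (hq : 0 < q)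
    {g : EuclideanSpace ℝ (Fin n) → ℝ} {A : ℝ≥0∞}
    (hg : ∀ k : ℤ, eLpNorm ((annulus n k).indicator g) (ENNReal.ofReal p) volume ≤
      A * 2 ^ ((k : ℝ) * (lam - α))) :
    herzMorreyNorm n α lam p q g ≤ A * (1 - 2 ^ (-(lam * q)))⁻¹ ^ (1 / q) := by
  refine iSup_le fun L => ?_
  have hterm (k : ℤ) : ENNReal.ofReal ((2 : ℝ) ^ ((k : ℝ) * α * q)) *
      eLpNorm ((annulus n k).indicator g) (ENNReal.ofReal p) volume ^ q ≤
        A ^ q * 2 ^ ((k : ℝ) * (lam * q)) := by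
    calc _ ≤ 2 ^ ((k : ℝ) * α * q) * (A * 2 ^ ((k : ℝ) * (lam - α))) ^ q := by
          rw [ofReal_two_rpow]; gcongr; exact hg k
      _ = A ^ q * 2 ^ ((k : ℝ) * (lam * q)) := by
          rw [ENNReal.mul_rpow_of_nonneg _ _ hq.le, ← ENNReal.rpow_mul, mul_left_comm,
            ← two_rpow_add]
          ring_nf
  have hsum : ∑' k : {k : ℤ // k ≤ L}, ENNReal.ofReal ((2 : ℝ) ^ ((k.1 : ℝ) * α * q)) *
      eLpNorm ((annulus n k.1).indicator g) (ENNReal.ofReal p) volume ^ q ≤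
        A ^ q * (2 ^ ((L : ℝ) * (lam * q)) * (1 - 2 ^ (-(lam * q)))⁻¹) := by
    rw [← tsum_two_rpow_of_le, ← ENNReal.tsum_mul_left]
    exact ENNReal.tsum_le_tsum fun k => hterm k.1
  have hq' : (0 : ℝ) ≤ 1 / q := by positivity
  calc _ ≤ 2 ^ (-(L : ℝ) * lam) *
        (A ^ q * (2 ^ ((L : ℝ) * (lam * q)) * (1 - 2 ^ (-(lam * q)))⁻¹)) ^ (1 / q) := by
        rw [ofReal_two_rpow]
        gcongr
    _ = A * (1 - 2 ^ (-(lam * q)))⁻¹ ^ (1 / q) := by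
        rw [ENNReal.mul_rpow_of_nonneg _ _ hq', ENNReal.mul_rpow_of_nonneg _ _ hq',
          ← ENNReal.rpow_mul, ← ENNReal.rpow_mul, mul_one_div_cancel hq.ne', ENNReal.rpow_one,
          mul_assoc, mul_assoc lam, mul_one_div_cancel hq.ne', mul_one, neg_mul]
        calc _ = A * (1 - 2 ^ (-(lam * q)))⁻¹ ^ (1 / q) *
              (2 ^ ((L : ℝ) * lam) * 2 ^ (-((L : ℝ) * lam))) := by ring
          _ = _ := by rw [two_rpow_mul_two_rpow_neg, mul_one]

end MorreyNorms

section Analysis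

lemma eLpNorm_one_le_mul_measure_rpow_of_support_subset {α E : Type*} [MeasurableSpace α]
    {μ : Measure α} [NormedAddCommGroup E] {g : α → E} {p : ℝ≥0∞} {s : Set α}
    (hg : AEStronglyMeasurable g μ) (hp : 1 ≤ p) (hs : MeasurableSet s) (hsupp : support g ⊆ s) :
    eLpNorm g 1 μ ≤ eLpNorm g p μ * μ s ^ (1 - 1 / p.toReal) := by
  rw [← Set.indicator_eq_self.2 hsupp, eLpNorm_indicator_eq_eLpNorm_restrict hs,
    eLpNorm_indicator_eq_eLpNorm_restrict hs]
  simpa using eLpNorm_le_eLpNorm_mul_rpow_measure_univ hp hg.restrict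

/-- Only `f` needs to be integrable: if `g` is not, then neither is `f + g`, and both integrals
vanish. -/
lemma norm_integral_add_le_of_integrable {α E : Type*} [MeasurableSpace α] {μ : Measure α}
    [NormedAddCommGroup E] [NormedSpace ℝ E] {f g : α → E} (hf : Integrable f μ) :
    ‖∫ x, f x + g x ∂μ‖ ≤ ‖∫ x, f x ∂μ‖ + ‖∫ x, g x ∂μ‖ := by
  by_cases hg : Integrable g μ
  · rw [integral_add hf hg]
    exact norm_add_le _ _
  · rw [integral_undef fun hfg => hg (by simpa [Pi.sub_def] using hfg.sub hf), norm_zero]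
    positivity

lemma rpow_norm_sub_le_of_two_mul_le {E : Type*} [SeminormedAddCommGroup E] {x y : E} {r s : ℝ}
    (hr : 0 < r) (hs : s ≤ 0) (hy : ‖y‖ ≤ r) (hx : 2 * r ≤ ‖x‖) : ‖x - y‖ ^ s ≤ r ^ s :=
  Real.rpow_le_rpow_of_nonpos hr (by linarith [norm_sub_norm_le x y]) hs

variable {n : ℕ} {β : ℝ}

lemma stronglyMeasurable_rieszPot {f : EuclideanSpace ℝ (Fin n) → ℝ} (hf : Measurable f) :
    StronglyMeasurable (rieszPot n β f) :=
  StronglyMeasurable.integral_prod_right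
    (f := fun x y => f y * ‖x - y‖ ^ (β - (n : ℝ))) (by fun_prop)

lemma norm_rieszPot_add_le {g h : EuclideanSpace ℝ (Fin n) → ℝ} {x : EuclideanSpace ℝ (Fin n)}
    (hg : Integrable (fun y => g y * ‖x - y‖ ^ (β - (n : ℝ)))) :
    ‖rieszPot n β (g + h) x‖ ≤ ‖rieszPot n β g x‖ + ‖rieszPot n β h x‖ := by
  simpa only [rieszPot, Pi.add_apply, add_mul] using norm_integral_add_le_of_integrable hg

section Far

variable {g : EuclideanSpace ℝ (Fin n) → ℝ} {r : ℝ} {x : EuclideanSpace ℝ (Fin n)}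

lemma norm_mul_rpow_norm_sub_le (hβn : β < n) (hr : 0 < r) (hsupp : support g ⊆ closedBall 0 r)
    (hx : 2 * r ≤ ‖x‖) (y : EuclideanSpace ℝ (Fin n)) :
    ‖g y * ‖x - y‖ ^ (β - (n : ℝ))‖ ≤ r ^ (β - (n : ℝ)) * ‖g y‖ := by
  by_cases hy : g y = 0
  · simp [hy]
  rw [norm_mul, mul_comm, Real.norm_of_nonneg (by positivity)]
  exact mul_le_mul_of_nonneg_right (rpow_norm_sub_le_of_two_mul_le hr (by linarith)
    (by simpa using hsupp (mem_support.2 hy)) hx) (norm_nonneg _)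

lemma integrable_mul_rpow_norm_sub (hβn : β < n) (hg : Integrable g) (hr : 0 < r)
    (hsupp : support g ⊆ closedBall 0 r) (hx : 2 * r ≤ ‖x‖) :
    Integrable (fun y => g y * ‖x - y‖ ^ (β - (n : ℝ))) :=
  Integrable.mono' (hg.norm.const_mul _)
    (hg.aestronglyMeasurable.mul
      (by fun_prop : Measurable fun y => ‖x - y‖ ^ (β - (n : ℝ))).aestronglyMeasurable)
    (ae_of_all _ (norm_mul_rpow_norm_sub_le hβn hr hsupp hx))

lemma norm_rieszPot_le_of_support_subset (hβn : β < n) (hg : Integrable g) (hr : 0 < r)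
    (hsupp : support g ⊆ closedBall 0 r) (hx : 2 * r ≤ ‖x‖) :
    ‖rieszPot n β g x‖ ≤ r ^ (β - (n : ℝ)) * ∫ y, ‖g y‖ := by
  rw [← integral_const_mul]
  exact norm_integral_le_of_norm_le (hg.norm.const_mul _)
    (ae_of_all _ (norm_mul_rpow_norm_sub_le hβn hr hsupp hx))

end Far

end Analysis

section Atoms

lemma eLpNorm_sum_mul_le {ι α : Type*} [MeasurableSpace α] {μ : Measure α} {T : Finset ι}
    {s : ι → ℝ} {a : ι → α → ℝ} (ha : ∀ j ∈ T, AEStronglyMeasurable (a j) μ) {p : ℝ≥0∞}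
    (hp : 1 ≤ p) :
    eLpNorm (fun x => ∑ j ∈ T, s j * a j x) p μ ≤ ∑ j ∈ T, ‖s j‖ₑ * eLpNorm (a j) p μ := by
  have hsum : (fun x => ∑ j ∈ T, s j * a j x) = ∑ j ∈ T, s j • a j := by
    ext x; simp [Finset.sum_apply]
  rw [hsum]
  refine (eLpNorm_sum_le (fun j hj => (ha j hj).const_smul _) hp).trans_eq ?_
  simp_rw [eLpNorm_const_smul]

lemma volume_closedBall_two_zpow (n : ℕ) (j : ℤ) :
    volume (closedBall (0 : EuclideanSpace ℝ (Fin n)) ((2 : ℝ) ^ j)) =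
      2 ^ ((j : ℝ) * n) * volume (ball (0 : EuclideanSpace ℝ (Fin n)) 1) := by
  rw [Measure.addHaar_closedBall _ _ (by positivity), finrank_euclideanSpace_fin,
    ← Real.rpow_intCast, ← Real.rpow_natCast, ← Real.rpow_mul zero_le_two, ofReal_two_rpow]

structure IsCentralAtom (n : ℕ) (p α : ℝ) (j : ℤ) (b : EuclideanSpace ℝ (Fin n) → ℝ) : Prop where
  measurable : Measurable b
  support_subset : support b ⊆ closedBall 0 ((2 : ℝ) ^ j)
  eLpNorm_le : eLpNorm b (ENNReal.ofReal p) volume ≤ ENNReal.ofReal ((2 : ℝ) ^ (-(j : ℝ) * α))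

namespace IsCentralAtom

variable {n : ℕ} {p α : ℝ} {j : ℤ} {b : EuclideanSpace ℝ (Fin n) → ℝ}

lemma eLpNorm_le_two_rpow (hb : IsCentralAtom n p α j b) :
    eLpNorm b (ENNReal.ofReal p) volume ≤ 2 ^ (-(j : ℝ) * α) :=
  ofReal_two_rpow _ ▸ hb.eLpNorm_le

lemma memLp (hb : IsCentralAtom n p α j b) : MemLp b (ENNReal.ofReal p) volume :=
  ⟨hb.measurable.aestronglyMeasurable, hb.eLpNorm_le.trans_lt ENNReal.ofReal_lt_top⟩

lemma eLpNorm_one_le (hb : IsCentralAtom n p α j b) (hp : 1 ≤ p) :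
    eLpNorm b 1 volume ≤ volume (ball (0 : EuclideanSpace ℝ (Fin n)) 1) ^ (1 - 1 / p) *
      2 ^ ((j : ℝ) * (n * (1 - 1 / p) - α)) := by
  have hσ : 0 ≤ 1 - 1 / p := sub_nonneg.2 ((div_le_one (by linarith)).2 hp)
  calc eLpNorm b 1 volume
      ≤ eLpNorm b (ENNReal.ofReal p) volume *
          volume (closedBall (0 : EuclideanSpace ℝ (Fin n)) ((2 : ℝ) ^ j)) ^ (1 - 1 / p) := by
        simpa [ENNReal.toReal_ofReal (zero_le_one.trans hp)] using
          eLpNorm_one_le_mul_measure_rpow_of_support_subset hb.measurable.aestronglyMeasurable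
            (ENNReal.one_le_ofReal.2 hp) measurableSet_closedBall hb.support_subset
    _ ≤ 2 ^ (-(j : ℝ) * α) *
          (2 ^ ((j : ℝ) * n) * volume (ball (0 : EuclideanSpace ℝ (Fin n)) 1)) ^ (1 - 1 / p) := by
        rw [volume_closedBall_two_zpow]
        gcongr
        exact hb.eLpNorm_le_two_rpow
    _ = _ := by
        rw [ENNReal.mul_rpow_of_nonneg _ _ hσ, ← ENNReal.rpow_mul, ← mul_assoc, ← two_rpow_add,
          mul_comm]
        ring_nf

lemma integrable (hb : IsCentralAtom n p α j b) (hp : 1 ≤ p) : Integrable b := by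
  refine memLp_one_iff_integrable.1 ⟨hb.measurable.aestronglyMeasurable,
    (hb.eLpNorm_one_le hp).trans_lt (ENNReal.mul_lt_top ?_ ?_)⟩
  · exact ENNReal.rpow_lt_top_of_nonneg (sub_nonneg.2 ((div_le_one (by linarith)).2 hp))
      measure_ball_lt_top.ne
  · exact (two_rpow_ne_top _).lt_top

end IsCentralAtom

variable {n : ℕ} {p α lam : ℝ} {s : ℤ → ℝ} {a : ℤ → EuclideanSpace ℝ (Fin n) → ℝ} {M : ℝ≥0∞}
  {T : Finset ℤ}

lemma eLpNorm_sum_mul_atoms_le_of_ge (hp : 1 ≤ p) (ha : ∀ j, IsCentralAtom n p α j (a j))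
    (hs : ∀ j, 0 ≤ s j) (hM : ∀ j, ENNReal.ofReal (s j) ≤ 2 ^ ((j : ℝ) * lam) * M) {K : ℤ}
    (hT : ∀ j ∈ T, K ≤ j) :
    eLpNorm (fun x => ∑ j ∈ T, s j * a j x) (ENNReal.ofReal p) volume ≤
      M * (2 ^ (-(K : ℝ) * (α - lam)) * (1 - 2 ^ (-(α - lam)))⁻¹) := by
  refine (eLpNorm_sum_mul_le (fun j _ => (ha j).measurable.aestronglyMeasurable)
    (ENNReal.one_le_ofReal.2 hp)).trans ?_
  calc ∑ j ∈ T, ‖s j‖ₑ * eLpNorm (a j) (ENNReal.ofReal p) volume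
      ≤ ∑ j ∈ T, M * 2 ^ (-(j : ℝ) * (α - lam)) := by
        refine Finset.sum_le_sum fun j _ => ?_
        rw [Real.enorm_eq_ofReal (hs j)]
        calc _ ≤ 2 ^ ((j : ℝ) * lam) * M * 2 ^ (-(j : ℝ) * α) := by
              gcongr; exacts [hM j, (ha j).eLpNorm_le_two_rpow]
          _ = M * 2 ^ (-(j : ℝ) * (α - lam)) := by
              rw [mul_comm _ M, mul_assoc, ← two_rpow_add]; ring_nf
    _ ≤ _ := by
        rw [← Finset.mul_sum]
        gcongr
        exact sum_two_rpow_neg_le_of_ge hT _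

lemma eLpNorm_one_sum_mul_atoms_le_of_le (hp : 1 ≤ p) (ha : ∀ j, IsCentralAtom n p α j (a j))
    (hs : ∀ j, 0 ≤ s j) (hM : ∀ j, ENNReal.ofReal (s j) ≤ 2 ^ ((j : ℝ) * lam) * M) {K : ℤ}
    (hT : ∀ j ∈ T, j ≤ K) :
    eLpNorm (fun x => ∑ j ∈ T, s j * a j x) 1 volume ≤
      M * volume (ball (0 : EuclideanSpace ℝ (Fin n)) 1) ^ (1 - 1 / p) *
        (2 ^ ((K : ℝ) * (lam + n * (1 - 1 / p) - α)) *
          (1 - 2 ^ (-(lam + n * (1 - 1 / p) - α)))⁻¹) := by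
  refine (eLpNorm_sum_mul_le (fun j _ => (ha j).measurable.aestronglyMeasurable)
    le_rfl).trans ?_
  calc ∑ j ∈ T, ‖s j‖ₑ * eLpNorm (a j) 1 volume
      ≤ ∑ j ∈ T, M * volume (ball (0 : EuclideanSpace ℝ (Fin n)) 1) ^ (1 - 1 / p) *
          2 ^ ((j : ℝ) * (lam + n * (1 - 1 / p) - α)) := by
        refine Finset.sum_le_sum fun j _ => ?_
        rw [Real.enorm_eq_ofReal (hs j)]
        calc _ ≤ 2 ^ ((j : ℝ) * lam) * M * (volume (ball (0 : EuclideanSpace ℝ (Fin n)) 1) ^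
                (1 - 1 / p) * 2 ^ ((j : ℝ) * (n * (1 - 1 / p) - α))) := by
              gcongr; exacts [hM j, (ha j).eLpNorm_one_le hp]
          _ = M * volume (ball (0 : EuclideanSpace ℝ (Fin n)) 1) ^ (1 - 1 / p) *
                (2 ^ ((j : ℝ) * lam) * 2 ^ ((j : ℝ) * (n * (1 - 1 / p) - α))) := by ring
          _ = _ := by rw [← two_rpow_add]; ring_nf
    _ ≤ _ := by
        rw [← Finset.mul_sum]
        gcongr
        exact sum_two_rpow_le_of_le hT _

end Atoms

section Annulus

variable {n : ℕ} {β : ℝ}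

lemma measurableSet_annulus (n : ℕ) (k : ℤ) : MeasurableSet (annulus n k) :=
  measurableSet_closedBall.diff measurableSet_closedBall

lemma volume_annulus_le (n : ℕ) (k : ℤ) :
    volume (annulus n k) ≤ 2 ^ ((k : ℝ) * n) * volume (ball (0 : EuclideanSpace ℝ (Fin n)) 1) :=
  volume_closedBall_two_zpow n k ▸ measure_mono Set.sdiff_subset

lemma two_mul_two_zpow_le_norm_of_mem_annulus {k : ℤ} {x : EuclideanSpace ℝ (Fin n)}
    (hx : x ∈ annulus n k) : 2 * (2 : ℝ) ^ (k - 2) ≤ ‖x‖ := by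
  have hx₂ := hx.2
  rw [mem_closedBall, dist_zero_right, not_le] at hx₂
  have h : (2 : ℝ) ^ (k - 1) = 2 * 2 ^ (k - 2) := by
    rw [← zpow_one_add₀ two_ne_zero]; ring_nf
  linarith

lemma eLpNorm_annulus_rieszPot_add_le {g h : EuclideanSpace ℝ (Fin n) → ℝ} {k : ℤ} {p : ℝ}
    (hβn : β < n) (hg : Integrable g) (hgsupp : support g ⊆ closedBall 0 ((2 : ℝ) ^ (k - 2)))
    (hh : Measurable h) (hp : 1 ≤ p) :
    eLpNorm ((annulus n k).indicator (rieszPot n β (g + h))) (ENNReal.ofReal p) volume ≤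
      2 ^ (((k : ℝ) - 2) * (β - n)) * eLpNorm g 1 volume *
          (2 ^ ((k : ℝ) * n) * volume (ball (0 : EuclideanSpace ℝ (Fin n)) 1)) ^ (1 / p) +
        eLpNorm (rieszPot n β h) (ENNReal.ofReal p) volume := by
  set D := ((2 : ℝ) ^ (k - 2)) ^ (β - n) * ∫ y, ‖g y‖
  have hD₀ : 0 ≤ D := mul_nonneg (by positivity) (integral_nonneg fun _ => norm_nonneg _)
  have hpt (x : EuclideanSpace ℝ (Fin n)) : ‖(annulus n k).indicator (rieszPot n β (g + h)) x‖ ≤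
      ‖((annulus n k).indicator (fun _ => D) +
        (annulus n k).indicator fun z => ‖rieszPot n β h z‖) x‖ := by
    by_cases hx : x ∈ annulus n k
    · have hx' := two_mul_two_zpow_le_norm_of_mem_annulus hx
      simp only [Pi.add_apply, Set.indicator_of_mem hx]
      rw [Real.norm_of_nonneg (add_nonneg hD₀ (norm_nonneg _))]
      exact (norm_rieszPot_add_le
        (integrable_mul_rpow_norm_sub hβn hg (by positivity) hgsupp hx')).trans
        (add_le_add_left (norm_rieszPot_le_of_support_subset hβn hg (by positivity) hgsupp hx') _)
    · simp [hx]
  have hD : ‖D‖ₑ = 2 ^ (((k : ℝ) - 2) * (β - n)) * eLpNorm g 1 volume := by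
    rw [Real.enorm_eq_ofReal hD₀, ENNReal.ofReal_mul (by positivity),
      ← Real.rpow_intCast, ← Real.rpow_mul zero_le_two, ofReal_two_rpow,
      ofReal_integral_norm_eq_lintegral_enorm hg, eLpNorm_one_eq_lintegral_enorm]
    push_cast
    rfl
  have hp₀ : 0 < p := by linarith
  calc _ ≤ _ := eLpNorm_mono hpt
    _ ≤ _ := eLpNorm_add_le
        (aestronglyMeasurable_const.indicator (measurableSet_annulus n k))
        ((stronglyMeasurable_rieszPot hh).norm.aestronglyMeasurable.indicator
          (measurableSet_annulus n k))
        (ENNReal.one_le_ofReal.2 hp)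
    _ ≤ _ := by
        gcongr
        · rw [eLpNorm_indicator_const (measurableSet_annulus n k)
            (ENNReal.ofReal_pos.2 hp₀).ne' ENNReal.ofReal_ne_top, ENNReal.toReal_ofReal hp₀.le, hD]
          gcongr
          exact volume_annulus_le n k
        · exact (eLpNorm_indicator_le _).trans (eLpNorm_norm _).le

end Annulus

section AtomicDecomposition

variable {n : ℕ} {β p₁ p₂ α lam C₀ : ℝ} {s : ℤ → ℝ} {a : ℤ → EuclideanSpace ℝ (Fin n) → ℝ}
  {M : ℝ≥0∞}

lemma eLpNorm_annulus_rieszPot_sum_le (hβn : β < n) (hp₁ : 1 ≤ p₁) (hp₂ : 1 ≤ p₂)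
    (hbound : ∀ g : EuclideanSpace ℝ (Fin n) → ℝ, MemLp g (ENNReal.ofReal p₁) volume →
      eLpNorm (rieszPot n β g) (ENNReal.ofReal p₂) volume ≤
        ENNReal.ofReal C₀ * eLpNorm g (ENNReal.ofReal p₁) volume)
    (hs : ∀ j, 0 ≤ s j) (hM : ∀ j, ENNReal.ofReal (s j) ≤ 2 ^ ((j : ℝ) * lam) * M)
    (ha : ∀ j, IsCentralAtom n p₁ α j (a j)) (S : Finset ℤ) (k : ℤ) :
    eLpNorm ((annulus n k).indicator (rieszPot n β fun x => ∑ j ∈ S, s j * a j x))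
        (ENNReal.ofReal p₂) volume ≤
      2 ^ (((k : ℝ) - 2) * (β - n)) * (M * volume (ball (0 : EuclideanSpace ℝ (Fin n)) 1) ^
          (1 - 1 / p₁) * (2 ^ (((k - 2 : ℤ) : ℝ) * (lam + n * (1 - 1 / p₁) - α)) *
            (1 - 2 ^ (-(lam + n * (1 - 1 / p₁) - α)))⁻¹)) *
          (2 ^ ((k : ℝ) * n) * volume (ball (0 : EuclideanSpace ℝ (Fin n)) 1)) ^ (1 / p₂) +
        ENNReal.ofReal C₀ *
          (M * (2 ^ (-((k - 1 : ℤ) : ℝ) * (α - lam)) * (1 - 2 ^ (-(α - lam)))⁻¹)) := by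
  set g := fun x => ∑ j ∈ S.filter (· < k - 1), s j * a j x
  set h := fun x => ∑ j ∈ S.filter (fun j => ¬ j < k - 1), s j * a j x
  have hgh : (fun x => ∑ j ∈ S, s j * a j x) = g + h := by
    ext x; simp only [g, h, Pi.add_apply, Finset.sum_filter_add_sum_filter_not]
  have hg_supp : support g ⊆ closedBall 0 ((2 : ℝ) ^ (k - 2)) := by
    intro y hy
    obtain ⟨j, hj, hjy⟩ := Finset.exists_ne_zero_of_sum_ne_zero hy
    rw [Finset.mem_filter] at hj
    exact closedBall_subset_closedBall (zpow_le_zpow_right₀ one_le_two (by omega))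
      ((ha j).support_subset (right_ne_zero_of_mul hjy))
  have hg_far := eLpNorm_one_sum_mul_atoms_le_of_le (K := k - 2) hp₁ ha hs hM
    (T := S.filter (· < k - 1)) (fun j hj => by rw [Finset.mem_filter] at hj; omega)
  have hh_near := eLpNorm_sum_mul_atoms_le_of_ge (K := k - 1) hp₁ ha hs hM
    (T := S.filter (fun j => ¬ j < k - 1)) (fun j hj => by rw [Finset.mem_filter] at hj; omega)
  have hh_bound := hbound h (memLp_finsetSum _ fun j _ => (ha j).memLp.const_mul _)
  rw [hgh]
  refine (eLpNorm_annulus_rieszPot_add_le hβn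
    (integrable_finsetSum _ fun j _ => ((ha j).integrable hp₁).const_mul _) hg_supp
    (Finset.measurable_sum _ fun j _ => (ha j).measurable.const_mul _) hp₂).trans ?_
  gcongr
  exact hh_bound.trans (by gcongr)

theorem exists_eLpNorm_annulus_rieszPot_sum_le (hβn : β < n) (hp₁ : 1 ≤ p₁) (hp₂ : 1 ≤ p₂)
    (hp : (n : ℝ) / p₂ = n / p₁ - β) (hlam : 0 < lam) (hlamα : lam < α)
    (hα : α < n * (1 - 1 / p₁))
    (hbound : ∀ g : EuclideanSpace ℝ (Fin n) → ℝ, MemLp g (ENNReal.ofReal p₁) volume →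
      eLpNorm (rieszPot n β g) (ENNReal.ofReal p₂) volume ≤
        ENNReal.ofReal C₀ * eLpNorm g (ENNReal.ofReal p₁) volume) :
    ∃ A : ℝ≥0∞, A ≠ ⊤ ∧ ∀ (s : ℤ → ℝ) (a : ℤ → EuclideanSpace ℝ (Fin n) → ℝ) (M : ℝ≥0∞),
      (∀ j, 0 ≤ s j) → (∀ j, ENNReal.ofReal (s j) ≤ 2 ^ ((j : ℝ) * lam) * M) →
      (∀ j, IsCentralAtom n p₁ α j (a j)) → ∀ (S : Finset ℤ) (k : ℤ),
        eLpNorm ((annulus n k).indicator (rieszPot n β fun x => ∑ j ∈ S, s j * a j x))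
          (ENNReal.ofReal p₂) volume ≤ A * M * 2 ^ ((k : ℝ) * (lam - α)) := by
  set V := volume (ball (0 : EuclideanSpace ℝ (Fin n)) 1)
  set σ := 1 - 1 / p₁
  set c := lam + n * σ - α
  have hσ : 0 ≤ σ := sub_nonneg.2 ((div_le_one (by linarith)).2 hp₁)
  have hV : V ≠ ⊤ := measure_ball_lt_top.ne
  refine ⟨V ^ σ * V ^ (1 / p₂) * (1 - 2 ^ (-c))⁻¹ * 2 ^ (-2 * (β - n + c)) +
      ENNReal.ofReal C₀ * (1 - 2 ^ (-(α - lam)))⁻¹ * 2 ^ (α - lam), ?_, ?_⟩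
  · refine ENNReal.add_ne_top.2 ⟨?_, ?_⟩
    · refine ENNReal.mul_ne_top (ENNReal.mul_ne_top (ENNReal.mul_ne_top ?_ ?_) ?_)
        (two_rpow_ne_top _)
      · exact ENNReal.rpow_ne_top_of_nonneg hσ hV
      · exact ENNReal.rpow_ne_top_of_nonneg (by positivity) hV
      · exact inv_one_sub_two_rpow_neg_ne_top (by linarith)
    · exact ENNReal.mul_ne_top (ENNReal.mul_ne_top ENNReal.ofReal_ne_top
        (inv_one_sub_two_rpow_neg_ne_top (by linarith))) (two_rpow_ne_top _)
  intro s a M hs hM ha S k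
  have hfar_exp : (2 : ℝ≥0∞) ^ (((k : ℝ) - 2) * (β - n)) * 2 ^ (((k - 2 : ℤ) : ℝ) * c) *
      2 ^ ((k : ℝ) * n * (1 / p₂)) = 2 ^ (-2 * (β - n + c)) * 2 ^ ((k : ℝ) * (lam - α)) := by
    simp only [← two_rpow_add]
    congr 1
    push_cast
    linear_combination (k : ℝ) * hp
  have hnear_exp : (2 : ℝ≥0∞) ^ (-((k - 1 : ℤ) : ℝ) * (α - lam)) =
      2 ^ (α - lam) * 2 ^ ((k : ℝ) * (lam - α)) := by
    rw [← two_rpow_add]; push_cast; ring_nf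
  calc _ ≤ _ := eLpNorm_annulus_rieszPot_sum_le hβn hp₁ hp₂ hbound hs hM ha S k
    _ = M * V ^ σ * V ^ (1 / p₂) * (1 - 2 ^ (-c))⁻¹ * (2 ^ (((k : ℝ) - 2) * (β - n)) *
          2 ^ (((k - 2 : ℤ) : ℝ) * c) * 2 ^ ((k : ℝ) * n * (1 / p₂))) +
        ENNReal.ofReal C₀ * M * (1 - 2 ^ (-(α - lam)))⁻¹ *
          (2 ^ (α - lam) * 2 ^ ((k : ℝ) * (lam - α))) := by
        rw [ENNReal.mul_rpow_of_nonneg _ _ (by positivity), ← ENNReal.rpow_mul, hnear_exp]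
        ring
    _ = _ := by
        rw [hfar_exp]
        ring

end AtomicDecomposition

lemma one_lt_of_one_div_eq_one_div_sub {n β p₁ p₂ : ℝ} (hβ : 0 < β) (hn : 0 < n) (hp₁ : 1 < p₁)
    (hp₁n : p₁ < n / β) (hp₂ : 1 / p₂ = 1 / p₁ - β / n) : 1 < p₂ := by
  have hβp₁ : β / n < 1 / p₁ := by
    rw [div_lt_div_iff₀ hn (by linarith), one_mul]
    rw [lt_div_iff₀ hβ] at hp₁n
    linarith
  have hp₂_pos : 0 < 1 / p₂ := by rw [hp₂]; linarith
  have hp₂_lt : 1 / p₂ < 1 := by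
    rw [hp₂]
    linarith [div_pos hβ hn, (div_lt_one (by linarith : (0 : ℝ) < p₁)).2 hp₁]
  exact (div_lt_one (one_div_pos.1 hp₂_pos)).1 hp₂_lt

theorem stmt_6_general (n : ℕ) (β p₁ p₂ q₁ q₂ α lam : ℝ)
    (hβ0 : 0 < β) (hβn : β < n) (hp₁ : 1 < p₁) (hp₁n : p₁ < n / β)
    (hp₂ : 1 / p₂ = 1 / p₁ - β / n) (hq₁ : 0 < q₁) (hq₁₂ : q₁ ≤ q₂)
    (hlam : 0 < lam) (h2lam : 2 * lam < α) (hα : α < n * (1 - 1 / p₂) - β)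
    (C₀ : ℝ)
    (hbound : ∀ g : EuclideanSpace ℝ (Fin n) → ℝ, MemLp g (ENNReal.ofReal p₁) volume →
      eLpNorm (rieszPot n β g) (ENNReal.ofReal p₂) volume ≤
        ENNReal.ofReal C₀ * eLpNorm g (ENNReal.ofReal p₁) volume) :
    ∃ C : ℝ, 0 < C ∧
      ∀ (lamSeq : ℤ → ℝ), (∀ j, 0 ≤ lamSeq j) → (Function.support lamSeq).Finite →
      ∀ a : ℤ → EuclideanSpace ℝ (Fin n) → ℝ,
        (∀ j, Measurable (a j)) →
        (∀ j, Function.support (a j) ⊆ Metric.closedBall 0 ((2 : ℝ) ^ j)) →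
        (∀ j : ℤ, eLpNorm (a j) (ENNReal.ofReal p₁) volume ≤
          ENNReal.ofReal ((2 : ℝ) ^ (-(j : ℝ) * α))) →
      ∀ f : EuclideanSpace ℝ (Fin n) → ℝ, (f = fun x => ∑ᶠ j : ℤ, lamSeq j * a j x) →
        (⨆ L : ℤ, ENNReal.ofReal ((2 : ℝ) ^ (-(L : ℝ) * lam)) *
            (∑' k : {k : ℤ // k ≤ L},
                ENNReal.ofReal ((2 : ℝ) ^ ((k.1 : ℝ) * α * q₂)) *
                  eLpNorm ((annulus n k.1).indicator (rieszPot n β f))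
                      (ENNReal.ofReal p₂) volume ^ q₂) ^ (1 / q₂)) ≤
          ENNReal.ofReal C *
            ⨆ L : ℤ, ENNReal.ofReal ((2 : ℝ) ^ (-(L : ℝ) * lam)) *
              (∑' j : {j : ℤ // j ≤ L},
                  ENNReal.ofReal (lamSeq j.1) ^ q₁) ^ (1 / q₁) := by
  have hn : (0 : ℝ) < n := hβ0.trans hβn
  have hscale : (n : ℝ) / p₂ = n / p₁ - β := by
    rw [div_eq_mul_one_div, hp₂]; field_simp
  have hα₁ : α < n * (1 - 1 / p₁) := by
    rw [mul_one_sub, mul_one_div] at hα ⊢; linarith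
  obtain ⟨A, hA, hannulus⟩ := exists_eLpNorm_annulus_rieszPot_sum_le hβn hp₁.le
    (one_lt_of_one_div_eq_one_div_sub hβ0 hn hp₁ hp₁n hp₂).le hscale hlam (by linarith) hα₁ hbound
  have hq₂ : 0 < q₂ := hq₁.trans_le hq₁₂
  set B := A * (1 - 2 ^ (-(lam * q₂)))⁻¹ ^ (1 / q₂)
  have hB : B ≠ ⊤ := ENNReal.mul_ne_top hA (ENNReal.rpow_ne_top_of_nonneg (by positivity)
    (inv_one_sub_two_rpow_neg_ne_top (by positivity)))
  refine ⟨B.toReal + 1, by positivity, fun s hs hfin a ha_meas ha_supp ha_norm f hf => ?_⟩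
  have hf_sum : f = fun x => ∑ j ∈ hfin.toFinset, s j * a j x := by
    rw [hf]; ext x
    exact finsum_eq_sum_of_support_subset _ fun j hj => by simpa using left_ne_zero_of_mul hj
  subst hf_sum
  change herzMorreyNorm n α lam p₂ q₂ _ ≤ ENNReal.ofReal _ * seqMorreyNorm lam q₁ s
  calc _ ≤ A * seqMorreyNorm lam q₁ s * (1 - 2 ^ (-(lam * q₂)))⁻¹ ^ (1 / q₂) :=
        herzMorreyNorm_le_of_forall_annulus hq₂ (hannulus s a _ hs
          (ofReal_le_two_rpow_mul_seqMorreyNorm hq₁ s)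
          (fun j => ⟨ha_meas j, ha_supp j, ha_norm j⟩) _)
    _ = B * seqMorreyNorm lam q₁ s := by ring
    _ ≤ _ := by
        gcongr
        exact (ENNReal.le_ofReal_iff_toReal_le hB (by positivity)).2 (by linarith)

/-- the Herz–Morrey norm (with exponents `α, q₂, p₂`, Morrey parameter `λ`)
of `I^β f` of a finite atomic combination `f = ∑ λ_j a_j` is controlled by
`sup_L 2^{-Lλ} (∑_{j ≤ L} λ_j^{q₁})^{1/q₁}`. -/
theorem stmt_6 (n : ℕ) (hn : 1 ≤ n) (β p₁ p₂ q₁ q₂ α lam : ℝ)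
    (hβ0 : 0 < β) (hβn : β < n) (hp₁ : 1 < p₁) (hp₁n : p₁ < n / β)
    (hp₂ : 1 / p₂ = 1 / p₁ - β / n) (hq₁ : 0 < q₁) (hq₁₂ : q₁ ≤ q₂)
    (hlam : 0 < lam) (h2lam : 2 * lam < α) (hα : α < n * (1 - 1 / p₂) - β)
    (C₀ : ℝ) (hC₀ : 0 < C₀)
    (hbound : ∀ g : EuclideanSpace ℝ (Fin n) → ℝ, MemLp g (ENNReal.ofReal p₁) volume →
      eLpNorm (rieszPot n β g) (ENNReal.ofReal p₂) volume ≤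
        ENNReal.ofReal C₀ * eLpNorm g (ENNReal.ofReal p₁) volume) :
    ∃ C : ℝ, 0 < C ∧
      ∀ (lamSeq : ℤ → ℝ), (∀ j, 0 ≤ lamSeq j) → (Function.support lamSeq).Finite →
      ∀ a : ℤ → EuclideanSpace ℝ (Fin n) → ℝ,
        (∀ j, Measurable (a j)) →
        (∀ j, Function.support (a j) ⊆ Metric.closedBall 0 ((2 : ℝ) ^ j)) →
        (∀ j : ℤ, eLpNorm (a j) (ENNReal.ofReal p₁) volume ≤
          ENNReal.ofReal ((2 : ℝ) ^ (-(j : ℝ) * α))) →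
      ∀ f : EuclideanSpace ℝ (Fin n) → ℝ, (f = fun x => ∑ᶠ j : ℤ, lamSeq j * a j x) →
        (⨆ L : ℤ, ENNReal.ofReal ((2 : ℝ) ^ (-(L : ℝ) * lam)) *
            (∑' k : {k : ℤ // k ≤ L},
                ENNReal.ofReal ((2 : ℝ) ^ ((k.1 : ℝ) * α * q₂)) *
                  eLpNorm ((annulus n k.1).indicator (rieszPot n β f))
                      (ENNReal.ofReal p₂) volume ^ q₂) ^ (1 / q₂)) ≤
          ENNReal.ofReal C *
            ⨆ L : ℤ, ENNReal.ofReal ((2 : ℝ) ^ (-(L : ℝ) * lam)) *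
              (∑' j : {j : ℤ // j ≤ L},
                  ENNReal.ofReal (lamSeq j.1) ^ q₁) ^ (1 / q₁) :=
  stmt_6_general n β p₁ p₂ q₁ q₂ α lam hβ0 hβn hp₁ hp₁n hp₂ hq₁ hq₁₂ hlam h2lam hα C₀ hbound
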